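/- Let P_(·) be an irreducible G-stochastic function defined on A with gcd(A) = 1. Then all states have the same period: there exists d̂ ∈ ℕ_+ such that d_i = d̂ for every i ∈ G, where d_i = gcd{ s(𝐚) : 𝐚 a word with P_𝐚(i,i) > 0 }. -/

import Mathlib

open MeasureTheory
open scoped BigOperators

/-- The matrix of a word `𝐚 = (a_1, …, a_n)` (encoded as a list `[a_1, …, a_n]`),
namely `P_𝐚 = P_(a_n) ⋯ P_(a_1)`, so that `wordK P l i j` is the `(i,j)` entry. -/
noncomputable def wordK {G : Type*} [Fintype G] [DecidableEq G]
    (P : ℕ → G → G → ℝ) : List ℕ → G → G → ℝ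
  | [] => fun i j => if i = j then 1 else 0
  | a :: l => fun i j => ∑ m, wordK P l i m * P a m j

/-- A word over the alphabet `A`: a nonempty finite tuple with entries in `A`. -/
def IsWord (A : Set ℕ) (l : List ℕ) : Prop := l ≠ [] ∧ ∀ a ∈ l, a ∈ A

/-- `i` communicates with `j` if `P_𝐚(i,j) > 0` for some word `𝐚`. -/
def Communicates {G : Type*} [Fintype G] [DecidableEq G]
    (A : Set ℕ) (P : ℕ → G → G → ℝ) (i j : G) : Prop :=
  ∃ l : List ℕ, IsWord A l ∧ 0 < wordK P l i j

/-- `i` and `j` intercommunicate (every state intercommunicates with itself). -/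
def Intercommunicates {G : Type*} [Fintype G] [DecidableEq G]
    (A : Set ℕ) (P : ℕ → G → G → ℝ) (i j : G) : Prop :=
  i = j ∨ (Communicates A P i j ∧ Communicates A P j i)

/-- An intercommunicating class: an equivalence class of the intercommunication relation. -/
def IsInterClass {G : Type*} [Fintype G] [DecidableEq G]
    (A : Set ℕ) (P : ℕ → G → G → ℝ) (C : Set G) : Prop :=
  ∃ i : G, C = {j | Intercommunicates A P i j}

/-- A set `C` is closed if whenever `i ∈ C` communicates with `j`, then `j ∈ C`. -/
def IsClosedClass {G : Type*} [Fintype G] [DecidableEq G]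
    (A : Set ℕ) (P : ℕ → G → G → ℝ) (C : Set G) : Prop :=
  ∀ i ∈ C, ∀ j : G, Communicates A P i j → j ∈ C

/-- `d` is the greatest common divisor of the set `S ⊆ ℕ`. -/
def IsGCDOfSet (S : Set ℕ) (d : ℕ) : Prop :=
  (∀ n ∈ S, d ∣ n) ∧ ∀ e : ℕ, (∀ n ∈ S, e ∣ n) → e ∣ d

/-- The set of depths `s(𝐚)` of words `𝐚` with `P_𝐚(i,i) > 0`. -/
def ReturnDepths {G : Type*} [Fintype G] [DecidableEq G]
    (A : Set ℕ) (P : ℕ → G → G → ℝ) (i : G) : Set ℕ :=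
  {s | ∃ l : List ℕ, IsWord A l ∧ 0 < wordK P l i i ∧ l.sum = s}

/-- `E` is measurable with respect to the coordinates `(x_m)_{m < n}`. -/
def PastMeasurable {G : Type*} [MeasurableSpace G] (n : ℤ) (E : Set (ℤ → G)) : Prop :=
  MeasurableSet[MeasurableSpace.comap
    (fun x : ℤ → G => fun m : {m : ℤ // m < n} => x m.1) MeasurableSpace.pi] E

/-- `μ` is compatible with the imitation kernel
`p(g | w_{-1}, w_{-2}, …) = ∑_{k ∈ A} θ_k P_(k)(w_{-k}, g)` (here `θ` vanishes off `A`). -/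
def Compatible {G : Type*} [MeasurableSpace G] (θ : ℕ → ℝ) (P : ℕ → G → G → ℝ)
    (μ : Measure (ℤ → G)) : Prop :=
  ∀ (n : ℤ) (g : G) (E : Set (ℤ → G)), PastMeasurable n E →
    (μ (E ∩ {x | x n = g})).toReal
      = ∫ x in E, (∑' k : ℕ, θ k * P k (x (n - (k : ℤ))) g) ∂μ

/-
Concatenating a path `i → j`, a return loop at `j` and a path `j → i` gives a return loop at `i`,
as does concatenating just the two paths; the depths of these two loops at `i` differ by the depth
of the loop at `j`. Hence every common divisor of the return depths at `i` divides those at `j`,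
and by irreducibility all states have the same common divisors of return depths, hence the same
gcd. It is positive because letters, hence depths of words, are positive.
-/

theorem exists_isGCDOfSet (S : Set ℕ) : ∃ d, IsGCDOfSet S d := by
  set I : Ideal ℤ := Ideal.span ((↑) '' S)
  set g := Submodule.IsPrincipal.generator I
  have hI : Ideal.span {g} = I := Ideal.span_singleton_generator I
  refine ⟨g.natAbs, fun n hn => ?_, fun e he => ?_⟩
  · have hmem : (n : ℤ) ∈ Ideal.span {g} := hI ▸ Ideal.subset_span ⟨n, hn, rfl⟩
    exact Int.dvd_natCast.mp (Ideal.mem_span_singleton.mp hmem)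
  · have hle : I ≤ Ideal.span {(e : ℤ)} := by
      refine Ideal.span_le.mpr ?_
      rintro _ ⟨n, hn, rfl⟩
      exact Ideal.mem_span_singleton.mpr (Int.natCast_dvd_natCast.mpr (he n hn))
    have hg : g ∈ Ideal.span {(e : ℤ)} := hle (hI ▸ Ideal.mem_span_singleton_self g)
    exact Int.natCast_dvd.mp (Ideal.mem_span_singleton.mp hg)

theorem IsGCDOfSet.of_forall_dvd_iff {S T : Set ℕ} {d : ℕ} (hd : IsGCDOfSet S d)
    (hST : ∀ e, (∀ n ∈ S, e ∣ n) ↔ (∀ n ∈ T, e ∣ n)) : IsGCDOfSet T d :=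
  ⟨(hST d).mp hd.1, fun e he => hd.2 e ((hST e).mpr he)⟩

theorem IsWord.append {A : Set ℕ} {u v : List ℕ} (hu : IsWord A u) (hv : IsWord A v) :
    IsWord A (u ++ v) :=
  ⟨by simp [hu.1], fun a ha => (List.mem_append.mp ha).elim (hu.2 a) (hv.2 a)⟩

theorem IsWord.sum_pos {A : Set ℕ} {l : List ℕ} (hl : IsWord A l) (hApos : ∀ k ∈ A, 0 < k) :
    0 < l.sum := by
  obtain ⟨a, t, rfl⟩ := List.exists_cons_of_ne_nil hl.1
  rw [List.sum_cons]
  exact Nat.add_pos_left (hApos a (hl.2 a List.mem_cons_self)) _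

section WordMatrix

variable {G : Type*} [Fintype G] [DecidableEq G] (P : ℕ → G → G → ℝ)

theorem wordK_nonneg {l : List ℕ} (h : ∀ a ∈ l, ∀ i j : G, 0 ≤ P a i j) (i j : G) :
    0 ≤ wordK P l i j := by
  induction l generalizing j with
  | nil => simp only [wordK]; positivity
  | cons a t ih =>
    exact Finset.sum_nonneg fun m _ =>
      mul_nonneg (ih (fun b hb => h b (List.mem_cons_of_mem a hb)) m) (h a List.mem_cons_self m j)

theorem wordK_append (l l' : List ℕ) (i j : G) :
    wordK P (l ++ l') i j = ∑ m, wordK P l' i m * wordK P l m j := by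
  induction l generalizing j with
  | nil => simp [wordK, mul_ite]
  | cons a t ih =>
    simp only [List.cons_append, wordK, ih, Finset.sum_mul]
    rw [Finset.sum_comm]
    simp_rw [Finset.mul_sum, mul_assoc]

theorem wordK_append_pos {l l' : List ℕ} {i j k : G}
    (hnn : ∀ a ∈ l, ∀ i j : G, 0 ≤ P a i j) (hnn' : ∀ a ∈ l', ∀ i j : G, 0 ≤ P a i j)
    (h : 0 < wordK P l i j) (h' : 0 < wordK P l' j k) :
    0 < wordK P (l' ++ l) i k := by
  rw [wordK_append]
  exact Finset.sum_pos' (fun m _ => mul_nonneg (wordK_nonneg P hnn i m) (wordK_nonneg P hnn' m k))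
    ⟨j, Finset.mem_univ j, mul_pos h h'⟩

variable {A : Set ℕ} {P} (hPnn : ∀ k ∈ A, ∀ i j : G, 0 ≤ P k i j)
include hPnn

theorem IsWord.wordK_append_pos {l l' : List ℕ} {i j k : G} (hl : IsWord A l) (hl' : IsWord A l')
    (h : 0 < wordK P l i j) (h' : 0 < wordK P l' j k) : 0 < wordK P (l' ++ l) i k :=
  _root_.wordK_append_pos P (fun a ha => hPnn a (hl.2 a ha)) (fun a ha => hPnn a (hl'.2 a ha)) h h'

theorem sum_add_sum_mem_returnDepths {l l' : List ℕ} {i j : G} (hl : IsWord A l)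
    (hl' : IsWord A l') (h : 0 < wordK P l i j) (h' : 0 < wordK P l' j i) :
    l.sum + l'.sum ∈ ReturnDepths A P i :=
  ⟨l' ++ l, hl'.append hl, hl.wordK_append_pos hPnn hl' h h', by rw [List.sum_append, add_comm]⟩

theorem forall_dvd_returnDepths_of_communicates {i j : G} {e : ℕ}
    (hij : Communicates A P i j) (hji : Communicates A P j i)
    (he : ∀ n ∈ ReturnDepths A P i, e ∣ n) : ∀ n ∈ ReturnDepths A P j, e ∣ n := by
  obtain ⟨l, hl, hlpos⟩ := hij
  obtain ⟨l', hl', hl'pos⟩ := hji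
  rintro _ ⟨m, hm, hmpos, rfl⟩
  have hpath : e ∣ l.sum + l'.sum := he _ (sum_add_sum_mem_returnDepths hPnn hl hl' hlpos hl'pos)
  have hloop : e ∣ (m ++ l).sum + l'.sum :=
    he _ (sum_add_sum_mem_returnDepths hPnn (hm.append hl) hl'
      (hl.wordK_append_pos hPnn hm hlpos hmpos) hl'pos)
  rw [List.sum_append, add_comm m.sum, add_right_comm] at hloop
  exact (Nat.dvd_add_right hpath).mp hloop

end WordMatrix

theorem stmt_6_general {G : Type*} [Fintype G] [DecidableEq G] [Nonempty G]
    (A : Set ℕ) (hApos : ∀ k ∈ A, 0 < k)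
    (P : ℕ → G → G → ℝ)
    (hPnn : ∀ k ∈ A, ∀ i j : G, 0 ≤ P k i j)
    (hirr : ∀ i j : G, Communicates A P i j) :
    ∃ dhat : ℕ, 0 < dhat ∧ ∀ i : G, IsGCDOfSet (ReturnDepths A P i) dhat := by
  obtain ⟨i₀⟩ := ‹Nonempty G›
  obtain ⟨d, hd⟩ := exists_isGCDOfSet (ReturnDepths A P i₀)
  refine ⟨d, ?_, fun i => hd.of_forall_dvd_iff fun e => ⟨?_, ?_⟩⟩
  · obtain ⟨l, hl, hpos⟩ := hirr i₀ i₀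
    exact Nat.pos_of_dvd_of_pos (hd.1 _ ⟨l, hl, hpos, rfl⟩) (hl.sum_pos hApos)
  · exact forall_dvd_returnDepths_of_communicates hPnn (hirr i₀ i) (hirr i i₀)
  · exact forall_dvd_returnDepths_of_communicates hPnn (hirr i i₀) (hirr i₀ i)

/-- for an irreducible `G`-stochastic function with `gcd(A) = 1`,
all states have the same period `d̂`. -/
theorem stmt_6 {G : Type*} [Fintype G] [DecidableEq G] [Nonempty G]
    (A : Set ℕ) (hA : A.Nonempty) (hApos : ∀ k ∈ A, 0 < k)
    (P : ℕ → G → G → ℝ)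
    (hPnn : ∀ k ∈ A, ∀ i j : G, 0 ≤ P k i j)
    (hProw : ∀ k ∈ A, ∀ i : G, ∑ j, P k i j = 1)
    (hirr : ∀ i j : G, Communicates A P i j)
    (hgcdA : IsGCDOfSet A 1) :
    ∃ dhat : ℕ, 0 < dhat ∧ ∀ i : G, IsGCDOfSet (ReturnDepths A P i) dhat :=
  stmt_6_general A hApos P hPnn hirr
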